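/- arXiv:2007.05260 — 3 statements merged into one kernel-verified Lean document; each statement's English description precedes it below -/
import Mathlib

section
/- In the abstract Hilbert-space setting, if f ≠ 0 and F := ‖f − f₀‖_{H*}/‖f‖_{H*} denotes the oscillation factor (operator norms on the dual space H*), then (3/4)‖φ‖² ≤ (1 + 4F²)‖φ_h‖² + ‖φ − φ_h‖². -/
open RealInnerProductSpace

/-- Upper-bound (reliability) step of Theorem 3.4 in the abstract Hilbert-space setting:
if `f ≠ 0` and `F = ‖f − f₀‖/‖f‖` is the oscillation factor, then
`(3/4)‖φ‖² ≤ (1 + 4F²)‖φ_h‖² + ‖φ − φ_h‖²`. -/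
theorem reliability_upper_bound
    {H : Type*} [NormedAddCommGroup H] [InnerProductSpace ℝ H] [CompleteSpace H]
    (V : Submodule ℝ H) (hV : IsClosed (V : Set H))
    (f f₀ : H →L[ℝ] ℝ) (hf : f ≠ 0)
    (φ : H) (hφ : ∀ v : H, ⟪φ, v⟫ = f v)
    (φh : H) (hφhV : φh ∈ V) (hφh : ∀ v ∈ V, ⟪φh, v⟫ = f₀ v)
    (F : ℝ) (hF : F = ‖f - f₀‖ / ‖f‖) :
    (3 / 4) * ‖φ‖ ^ 2 ≤ (1 + 4 * F ^ 2) * ‖φh‖ ^ 2 + ‖φ - φh‖ ^ 2 := by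
  have hfeq : f = innerSL ℝ φ := by
    ext v; simp [← hφ v]
  have hnf : ‖f‖ = ‖φ‖ := by rw [hfeq, innerSL_apply_norm]
  have hnf0 : ‖f‖ ≠ 0 := norm_ne_zero_iff.mpr hf
  -- error expansion
  have hexp : ‖φ‖ ^ 2 = ‖φh‖ ^ 2 + 2 * ⟪φ - φh, φh⟫ + ‖φ - φh‖ ^ 2 := by
    have := norm_add_sq_real φh (φ - φh)
    have h' : φh + (φ - φh) = φ := by abel
    rw [h'] at this
    rw [this, real_inner_comm]
  have hie : ⟪φ - φh, φh⟫ = (f - f₀) φh := by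
    rw [inner_sub_left, hφ φh, hφh φh hφhV]
    simp
  have habs : |⟪φ - φh, φh⟫| ≤ F * ‖φ‖ * ‖φh‖ := by
    rw [hie]
    calc |(f - f₀) φh| ≤ ‖f - f₀‖ * ‖φh‖ := by
          simpa [Real.norm_eq_abs] using (f - f₀).le_opNorm φh
      _ = F * ‖φ‖ * ‖φh‖ := by
          rw [hF, ← hnf]; field_simp
  have hle : ⟪φ - φh, φh⟫ ≤ F * ‖φ‖ * ‖φh‖ := (abs_le.mp habs).2
  nlinarith [sq_nonneg (‖φ‖ / 2 - 2 * F * ‖φh‖), hexp, hle]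
end

section
/- In the abstract Hilbert-space setting, if f ≠ 0 and F := ‖f − f₀‖_{H*}/‖f‖_{H*} denotes the oscillation factor (operator norms on the dual space H*), then (3/4)‖φ_h‖² ≤ (1 + 4F²)‖φ‖²; in particular the computable estimator ‖φ_h‖ is bounded above by a multiple of ‖φ‖ depending only on F. -/
open RealInnerProductSpace

/-- Lower-bound (efficiency) step of Theorem 3.4 in the abstract Hilbert-space setting:
if `f ≠ 0` and `F = ‖f − f₀‖/‖f‖` is the oscillation factor, then
`(3/4)‖φ_h‖² ≤ (1 + 4F²)‖φ‖²`. -/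
theorem efficiency_lower_bound
    {H : Type*} [NormedAddCommGroup H] [InnerProductSpace ℝ H] [CompleteSpace H]
    (V : Submodule ℝ H) (hV : IsClosed (V : Set H))
    (f f₀ : H →L[ℝ] ℝ) (hf : f ≠ 0)
    (φ : H) (hφ : ∀ v : H, ⟪φ, v⟫ = f v)
    (φh : H) (hφhV : φh ∈ V) (hφh : ∀ v ∈ V, ⟪φh, v⟫ = f₀ v)
    (F : ℝ) (hF : F = ‖f - f₀‖ / ‖f‖) :
    (3 / 4) * ‖φh‖ ^ 2 ≤ (1 + 4 * F ^ 2) * ‖φ‖ ^ 2 := by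
  have hfφ : f = innerSL ℝ φ := by
    ext v; exact (hφ v).symm
  have hnorm : ‖f‖ = ‖φ‖ := by rw [hfφ]; exact innerSL_apply_norm ℝ φ
  have hfpos : (0:ℝ) < ‖f‖ := norm_pos_iff.mpr hf
  have hFnn : 0 ≤ F := by
    rw [hF]; positivity
  have hfd : ‖f - f₀‖ = F * ‖φ‖ := by
    rw [hF, ← hnorm]; field_simp
  -- ‖φh‖² = f₀ φh = f φh - (f - f₀) φh ≤ ‖φ‖‖φh‖ + ‖f-f₀‖‖φh‖
  have key : ‖φh‖ ^ 2 ≤ ‖φ‖ * ‖φh‖ + ‖f - f₀‖ * ‖φh‖ := by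
    have h1 : ‖φh‖ ^ 2 = f φh - (f - f₀) φh := by
      have := hφh φh hφhV
      rw [real_inner_self_eq_norm_sq] at this
      simp only [ContinuousLinearMap.sub_apply]
      linarith
    rw [h1]
    have h2 : f φh ≤ ‖φ‖ * ‖φh‖ := by
      rw [← hφ φh]; exact real_inner_le_norm φ φh
    have h3 : -((f - f₀) φh) ≤ ‖f - f₀‖ * ‖φh‖ := by
      have := le_abs_self (-((f - f₀) φh))
      have h4 := (f - f₀).le_opNorm φh
      rw [Real.norm_eq_abs] at h4
      have : |(f - f₀) φh| ≤ ‖f - f₀‖ * ‖φh‖ := h4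
      cases abs_cases ((f - f₀) φh) with
      | inl h => linarith [h.1]
      | inr h => linarith [h.1]
    linarith
  rw [hfd] at key
  nlinarith [norm_nonneg φ, norm_nonneg φh, sq_nonneg (2*F*‖φ‖ - ‖φh‖),
    sq_nonneg (‖φ‖ - ‖φh‖), sq_nonneg (F*‖φ‖), mul_nonneg hFnn (norm_nonneg φ)]
end

section
/- There exists a constant C, depending only on the dimension d and on c₀, such that for every R > 0, every truncation triple (η, a, v_R) for radius R, every convex open set Ω ⊆ ℝᵈ with B_R ⊆ Ω ⊆ B_{2R}, and every C¹ function v : ℝᵈ → ℝ with square-integrable gradient, one has ‖v − v_R − a‖_{L²(Ω)} ≤ C R ‖∇v − ∇v_R‖_{L²(Ω∖B_{R/2})}. (Note v − v_R − a and ∇v − ∇v_R both vanish on B_{R/2}.) -/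
open MeasureTheory Metric RealInnerProductSpace

noncomputable section

/-- Euclidean space `ℝᵈ`. -/
abbrev Ed (d : ℕ) := EuclideanSpace ℝ (Fin d)

/-- The `L²` norm of a (possibly vector-valued) function over a set `A ⊆ ℝᵈ`. -/
def l2On {d : ℕ} {F : Type*} [NormedAddCommGroup F] (A : Set (Ed d)) (w : Ed d → F) : ℝ :=
  Real.sqrt (∫ x in A, ‖w x‖ ^ 2)

/-- The annulus `B_R ∖ B_{R/2}` around the origin. -/
def annulus (d : ℕ) (R : ℝ) : Set (Ed d) :=
  closedBall (0 : Ed d) R \ closedBall (0 : Ed d) (R / 2)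

/-- A `C¹` cut-off function `η` for the truncation operator at radius `R`:
`0 ≤ η ≤ 1`, `η = 1` on `B_{R/2}`, `η = 0` outside `B_R`, `|∇η| ≤ c₀/R`. -/
structure IsCutoff (d : ℕ) (c₀ R : ℝ) (η : Ed d → ℝ) : Prop where
  smooth : ContDiff ℝ 1 η
  nonneg : ∀ x, 0 ≤ η x
  le_one : ∀ x, η x ≤ 1
  eq_one : ∀ x ∈ closedBall (0 : Ed d) (R / 2), η x = 1
  eq_zero : ∀ x ∉ closedBall (0 : Ed d) R, η x = 0
  grad_le : ∀ x, ‖gradient η x‖ ≤ c₀ / R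

/-- The average `a = ⨍_{B_R ∖ B_{R/2}} v` of `v` over the annulus. -/
def truncAvg (d : ℕ) (R : ℝ) (v : Ed d → ℝ) : ℝ :=
  ⨍ x in annulus d R, v x

/-- The truncated function `v_R = η ⬝ (v − a)`. -/
def truncFun {d : ℕ} (η v : Ed d → ℝ) (a : ℝ) : Ed d → ℝ :=
  fun x => η x * (v x - a)

/-!
Put `w := v - v_R - a = (1 - η) (v - a)`: it vanishes on `B_{R/2}` and `∇w = ∇v - ∇v_R`.
For `x ∈ Ω ⊆ B_{2R}` the point `x/4` lies in `B_{R/2}`, so the fundamental theorem of calculus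
along the segment from `x/4` to `x` and Cauchy–Schwarz give
`w(x)² ≤ (2R)² ∫_{1/4}^1 |∇w(t x)|² dt`. Integrate over `Ω` and swap the integrals: since `Ω` is
star-shaped about `0`, the substitution `y = t x` maps `Ω` into itself at the cost of the Jacobian
`t^{-d} ≤ 4^d`, and `∇w` vanishes on `B_{R/2}`, so only `Ω ∖ B_{R/2}` contributes.
-/

open Set
open scoped Pointwise

theorem sq_setIntegral_le_measureReal_mul_setIntegral_sq {α : Type*} [MeasurableSpace α]
    {μ : Measure α} {s : Set α} (hs : μ s ≠ ⊤) {f : α → ℝ} (hf : IntegrableOn f s μ)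
    (hf2 : IntegrableOn (fun x => f x ^ 2) s μ) :
    (∫ x in s, f x ∂μ) ^ 2 ≤ μ.real s * ∫ x in s, f x ^ 2 ∂μ := by
  rcases eq_or_ne (μ s) 0 with h0 | h0
  · simp [Measure.restrict_eq_zero.2 h0]
  have hm : 0 < μ.real s := ENNReal.toReal_pos h0 hs
  have hJensen := even_two.convexOn_pow.map_set_average_le (continuous_pow 2).continuousOn
    isClosed_univ h0 hs (ae_of_all _ fun _ => mem_univ _) hf hf2
  rw [setAverage_eq, setAverage_eq, smul_eq_mul, smul_eq_mul, inv_mul_eq_div, inv_mul_eq_div,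
    div_pow, div_le_div_iff₀ (by positivity) hm] at hJensen
  nlinarith

theorem sq_sub_le_mul_integral_deriv_sq {g g' : ℝ → ℝ} {a b : ℝ} (hab : a ≤ b)
    (hg : ∀ t ∈ Icc a b, HasDerivAt g (g' t) t) (hg' : ContinuousOn g' (Icc a b)) :
    (g b - g a) ^ 2 ≤ (b - a) * ∫ t in a..b, g' t ^ 2 := by
  have hint : IntegrableOn g' (Ioc a b) :=
    hg'.integrableOn_Icc.mono_set Ioc_subset_Icc_self
  have hint2 : IntegrableOn (fun t => g' t ^ 2) (Ioc a b) :=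
    (hg'.pow 2).integrableOn_Icc.mono_set Ioc_subset_Icc_self
  rw [← intervalIntegral.integral_eq_sub_of_hasDerivAt (by rwa [uIcc_of_le hab])
      ((intervalIntegrable_iff_integrableOn_Ioc_of_le hab).2 hint),
    intervalIntegral.integral_of_le hab, intervalIntegral.integral_of_le hab,
    ← Real.volume_real_Ioc_of_le hab]
  exact sq_setIntegral_le_measureReal_mul_setIntegral_sq measure_Ioc_lt_top.ne hint hint2

section NormedSpace

variable {E : Type*} [NormedAddCommGroup E] [NormedSpace ℝ E]

theorem sq_sub_smul_le_integral_fderiv_sq {w : E → ℝ} (hw : ContDiff ℝ 1 w) (x : E) {s : ℝ}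
    (hs : s ≤ 1) :
    (w x - w (s • x)) ^ 2 ≤ (1 - s) * ‖x‖ ^ 2 * ∫ t in s..1, ‖fderiv ℝ w (t • x)‖ ^ 2 := by
  have hDw : Continuous fun t : ℝ => fderiv ℝ w (t • x) :=
    (hw.continuous_fderiv one_ne_zero).comp (continuous_id.smul continuous_const)
  have hderiv : ∀ t : ℝ, HasDerivAt (fun t : ℝ => w (t • x)) (fderiv ℝ w (t • x) x) t := by
    intro t
    have hray : HasDerivAt (fun t : ℝ => t • x) x t := by
      simpa using (hasDerivAt_id t).smul_const x
    exact (hw.differentiable one_ne_zero _).hasFDerivAt.comp_hasDerivAt t hray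
  calc (w x - w (s • x)) ^ 2 = (w ((1 : ℝ) • x) - w (s • x)) ^ 2 := by rw [one_smul]
    _ ≤ (1 - s) * ∫ t in s..1, (fderiv ℝ w (t • x) x) ^ 2 :=
        sq_sub_le_mul_integral_deriv_sq hs (fun t _ => hderiv t)
          (hDw.clm_apply continuous_const).continuousOn
    _ ≤ (1 - s) * ∫ t in s..1, ‖fderiv ℝ w (t • x)‖ ^ 2 * ‖x‖ ^ 2 := by
        gcongr
        refine intervalIntegral.integral_mono_on hs
          (((hDw.clm_apply continuous_const).pow 2).intervalIntegrable _ _)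
          (((hDw.norm.pow 2).mul continuous_const).intervalIntegrable _ _) fun t _ => ?_
        rw [← sq_abs, ← Real.norm_eq_abs, ← mul_pow]
        gcongr
        exact (fderiv ℝ w (t • x)).le_opNorm x
    _ = (1 - s) * ‖x‖ ^ 2 * ∫ t in s..1, ‖fderiv ℝ w (t • x)‖ ^ 2 := by
        rw [intervalIntegral.integral_mul_const]; ring

theorem eqOn_fderiv_zero_closedBall {G : Type*} [NormedAddCommGroup G] [NormedSpace ℝ G]
    {w : E → G} (hw : Continuous (fderiv ℝ w)) {c : E} {r : ℝ} (hr : r ≠ 0)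
    (h : EqOn w 0 (ball c r)) : EqOn (fderiv ℝ w) 0 (closedBall c r) := by
  rw [← closure_ball c hr]
  refine EqOn.closure (fun y hy => ?_) hw continuous_const
  have hloc : w =ᶠ[nhds y] fun _ => 0 := Filter.eventually_of_mem (isOpen_ball.mem_nhds hy) h
  simp [hloc.fderiv_eq]

theorem sq_le_mul_integral_fderiv_sq_of_eqOn_zero_closedBall {w : E → ℝ} (hw : ContDiff ℝ 1 w)
    {R : ℝ} (hw0 : EqOn w 0 (closedBall 0 (R / 2))) {x : E} (hx : ‖x‖ ≤ 2 * R) :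
    w x ^ 2 ≤ (2 * R) ^ 2 * ∫ t in (4 : ℝ)⁻¹..1, ‖fderiv ℝ w (t • x)‖ ^ 2 := by
  have hquarter : w ((4 : ℝ)⁻¹ • x) = 0 := by
    refine hw0 (mem_closedBall_zero_iff.2 ?_)
    rw [norm_smul, Real.norm_of_nonneg (by norm_num)]
    linarith
  calc w x ^ 2 = (w x - w ((4 : ℝ)⁻¹ • x)) ^ 2 := by rw [hquarter, sub_zero]
    _ ≤ (1 - 4⁻¹) * ‖x‖ ^ 2 * ∫ t in (4 : ℝ)⁻¹..1, ‖fderiv ℝ w (t • x)‖ ^ 2 :=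
        sq_sub_smul_le_integral_fderiv_sq hw x (by norm_num)
    _ ≤ (2 * R) ^ 2 * ∫ t in (4 : ℝ)⁻¹..1, ‖fderiv ℝ w (t • x)‖ ^ 2 := by
        gcongr
        · exact intervalIntegral.integral_nonneg (by norm_num) fun t _ => sq_nonneg _
        · nlinarith [norm_nonneg x]

section AddHaar

variable [FiniteDimensional ℝ E] [MeasurableSpace E] [BorelSpace E] (μ : Measure E)
  [μ.IsAddHaarMeasure]

theorem StarConvex.setIntegral_comp_smul_le {Ω : Set E} (hΩ : StarConvex ℝ 0 Ω) {F : E → ℝ}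
    (hF : IntegrableOn F Ω μ) (hF0 : 0 ≤ F) {t : ℝ} (ht0 : 0 < t) (ht1 : t ≤ 1) :
    ∫ x in Ω, F (t • x) ∂μ ≤ (t ^ Module.finrank ℝ E)⁻¹ * ∫ x in Ω, F x ∂μ := by
  have hsub : t • Ω ⊆ Ω := by
    rintro _ ⟨x, hx, rfl⟩
    exact hΩ.smul_mem hx ht0.le ht1
  rw [Measure.setIntegral_comp_smul_of_pos μ F Ω ht0, smul_eq_mul]
  gcongr
  exact ae_of_all _ hF0

theorem StarConvex.setIntegral_intervalIntegral_comp_smul_le {Ω : Set E}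
    (hΩ : StarConvex ℝ 0 Ω) (hΩb : Bornology.IsBounded Ω) {F : E → ℝ} (hF : Continuous F)
    (hF0 : 0 ≤ F) {a : ℝ} (ha0 : 0 < a) (ha1 : a ≤ 1) :
    ∫ x in Ω, (∫ t in a..1, F (t • x)) ∂μ
      ≤ (1 - a) * (a ^ Module.finrank ℝ E)⁻¹ * ∫ x in Ω, F x ∂μ := by
  have hFΩ : IntegrableOn F Ω μ :=
    (hF.continuousOn.integrableOn_compact hΩb.isCompact_closure).mono_set subset_closure
  have hprod : Integrable (Function.uncurry fun x (t : ℝ) => F (t • x))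
      ((μ.restrict Ω).prod (volume.restrict (Ioc a 1))) := by
    rw [Measure.prod_restrict]
    exact ((hF.comp (continuous_snd.smul continuous_fst)).continuousOn.integrableOn_compact
      (hΩb.isCompact_closure.prod isCompact_Icc)).mono_set
      (prod_mono subset_closure Ioc_subset_Icc_self)
  calc ∫ x in Ω, (∫ t in a..1, F (t • x)) ∂μ = ∫ t in Ioc a 1, ∫ x in Ω, F (t • x) ∂μ := by
        simp_rw [intervalIntegral.integral_of_le ha1]
        exact integral_integral_swap hprod
    _ ≤ ∫ t in Ioc a 1, (a ^ Module.finrank ℝ E)⁻¹ * ∫ x in Ω, F x ∂μ := by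
        refine setIntegral_mono_on hprod.integral_prod_right (integrableOn_const ?_)
          measurableSet_Ioc fun t ht => ?_
        · exact measure_Ioc_lt_top.ne
        calc ∫ x in Ω, F (t • x) ∂μ
            ≤ (t ^ Module.finrank ℝ E)⁻¹ * ∫ x in Ω, F x ∂μ :=
              hΩ.setIntegral_comp_smul_le μ hFΩ hF0 (ha0.trans ht.1) ht.2
          _ ≤ (a ^ Module.finrank ℝ E)⁻¹ * ∫ x in Ω, F x ∂μ := by
              gcongr
              · exact integral_nonneg hF0
              · exact ht.1.le
    _ = (1 - a) * (a ^ Module.finrank ℝ E)⁻¹ * ∫ x in Ω, F x ∂μ := by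
        rw [setIntegral_const, Real.volume_real_Ioc_of_le ha1, smul_eq_mul, mul_assoc]

theorem StarConvex.setIntegral_sq_le_of_eqOn_zero_closedBall {Ω : Set E}
    (hΩ : StarConvex ℝ 0 Ω) (hΩm : MeasurableSet Ω) {R : ℝ} (hR : 0 < R)
    (hΩR : Ω ⊆ closedBall 0 (2 * R)) {w : E → ℝ} (hw : ContDiff ℝ 1 w)
    (hw0 : EqOn w 0 (closedBall 0 (R / 2))) :
    ∫ x in Ω, w x ^ 2 ∂μ ≤ (2 ^ (Module.finrank ℝ E + 1) * R) ^ 2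
      * ∫ x in Ω \ closedBall 0 (R / 2), ‖fderiv ℝ w x‖ ^ 2 ∂μ := by
  set d := Module.finrank ℝ E
  set F : E → ℝ := fun y => ‖fderiv ℝ w y‖ ^ 2
  have hF : Continuous F := (hw.continuous_fderiv one_ne_zero).norm.pow 2
  have hF0 : 0 ≤ F := fun _ => sq_nonneg _
  have hΩb : Bornology.IsBounded Ω := isBounded_closedBall.subset hΩR
  have hray (x : E) (hx : x ∈ Ω) : w x ^ 2 ≤ (2 * R) ^ 2 * ∫ t in (4 : ℝ)⁻¹..1, F (t • x) :=
    sq_le_mul_integral_fderiv_sq_of_eqOn_zero_closedBall hw hw0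
      (mem_closedBall_zero_iff.1 (hΩR hx))
  have hray_cont : Continuous fun x => ∫ t in (4 : ℝ)⁻¹..1, F (t • x) :=
    intervalIntegral.continuous_parametric_intervalIntegral_of_continuous'
      (f := fun x (t : ℝ) => F (t • x)) (hF.comp (continuous_snd.smul continuous_fst)) _ _
  have hF_ball : EqOn F 0 (closedBall 0 (R / 2)) := fun y hy => by
    simp [F, eqOn_fderiv_zero_closedBall (hw.continuous_fderiv one_ne_zero)
      (by positivity : R / 2 ≠ 0) (hw0.mono ball_subset_closedBall) hy]
  calc ∫ x in Ω, w x ^ 2 ∂μ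
      ≤ ∫ x in Ω, (2 * R) ^ 2 * (∫ t in (4 : ℝ)⁻¹..1, F (t • x)) ∂μ :=
        setIntegral_mono_on
          (((hw.continuous.pow 2).continuousOn.integrableOn_compact
            hΩb.isCompact_closure).mono_set subset_closure)
          (((continuous_const.mul hray_cont).continuousOn.integrableOn_compact
            hΩb.isCompact_closure).mono_set subset_closure) hΩm hray
    _ = (2 * R) ^ 2 * ∫ x in Ω, (∫ t in (4 : ℝ)⁻¹..1, F (t • x)) ∂μ := integral_const_mul _ _
    _ ≤ (2 * R) ^ 2 * ((1 - 4⁻¹) * ((4⁻¹ : ℝ) ^ d)⁻¹ * ∫ x in Ω, F x ∂μ) := by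
        gcongr
        exact hΩ.setIntegral_intervalIntegral_comp_smul_le μ hΩb hF hF0 (by norm_num)
          (by norm_num)
    _ = (2 * R) ^ 2 * ((1 - 4⁻¹) * ((4⁻¹ : ℝ) ^ d)⁻¹
          * ∫ x in Ω \ closedBall 0 (R / 2), F x ∂μ) := by
        rw [setIntegral_eq_of_subset_of_forall_sdiff_eq_zero hΩm sdiff_subset
          fun y hy => hF_ball (not_not.1 fun h => hy.2 ⟨hy.1, h⟩)]
    _ ≤ (2 ^ (d + 1) * R) ^ 2 * ∫ x in Ω \ closedBall 0 (R / 2), F x ∂μ := by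
        have hI := integral_nonneg (μ := μ.restrict (Ω \ closedBall 0 (R / 2))) hF0
        have h4 : (4 : ℝ) ^ d = (2 ^ d) ^ 2 := by rw [← pow_mul, mul_comm, pow_mul]; norm_num
        rw [inv_pow, inv_inv, h4, pow_succ (2 : ℝ) d]
        nlinarith [mul_nonneg (sq_nonneg (2 ^ d * R)) hI]

end AddHaar

end NormedSpace

theorem l2On_le_mul_l2On {d : ℕ} {F G : Type*} [NormedAddCommGroup F] [NormedAddCommGroup G]
    {A B : Set (Ed d)} {f : Ed d → F} {g : Ed d → G} {K : ℝ} (hK : 0 ≤ K)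
    (h : ∫ x in A, ‖f x‖ ^ 2 ≤ K ^ 2 * ∫ x in B, ‖g x‖ ^ 2) :
    l2On A f ≤ K * l2On B g := by
  rw [l2On, l2On, ← Real.sqrt_sq hK, ← Real.sqrt_mul (sq_nonneg K)]
  exact Real.sqrt_le_sqrt h

theorem norm_gradient_sub_gradient_eq_norm_fderiv_sub_const {H : Type*} [NormedAddCommGroup H]
    [InnerProductSpace ℝ H] [CompleteSpace H] {u v : H → ℝ} {x : H}
    (hu : DifferentiableAt ℝ u x) (hv : DifferentiableAt ℝ v x) (c : ℝ) :
    ‖gradient u x - gradient v x‖ = ‖fderiv ℝ (fun y => u y - v y - c) x‖ := by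
  rw [fderiv_sub_const, fderiv_fun_sub hu hv, gradient, gradient, ← map_sub]
  exact LinearIsometryEquiv.norm_map _ _

theorem trunc_poincare_estimate_general (d : ℕ) (c₀ : ℝ) :
    ∃ C : ℝ, 0 < C ∧
      ∀ (R : ℝ), 0 < R →
      ∀ (η : Ed d → ℝ), IsCutoff d c₀ R η →
      ∀ (Ω : Set (Ed d)), Convex ℝ Ω → IsOpen Ω →
        closedBall (0 : Ed d) R ⊆ Ω → Ω ⊆ closedBall (0 : Ed d) (2 * R) →
      ∀ (v : Ed d → ℝ), ContDiff ℝ 1 v →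
        Integrable (fun x => ‖gradient v x‖ ^ 2) →
        l2On Ω
            (fun x => v x - truncFun η v (truncAvg d R v) x - truncAvg d R v)
          ≤ C * R * l2On (Ω \ closedBall (0 : Ed d) (R / 2))
              (fun x => gradient v x - gradient (truncFun η v (truncAvg d R v)) x) := by
  refine ⟨2 ^ (d + 1), by positivity, ?_⟩
  intro R hR η hη Ω hΩ hΩo hBΩ hΩB v hv _
  set a := truncAvg d R v
  set w : Ed d → ℝ := fun x => v x - truncFun η v a x - a
  have hvR : ContDiff ℝ 1 (truncFun η v a) := hη.smooth.mul (hv.sub contDiff_const)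
  have hw : ContDiff ℝ 1 w := (hv.sub hvR).sub contDiff_const
  have hw0 : EqOn w 0 (closedBall 0 (R / 2)) := fun x hx => by
    simp [w, truncFun, hη.eq_one x hx]
  have hstar : StarConvex ℝ 0 Ω := hΩ.starConvex (hBΩ (mem_closedBall_self hR.le))
  have hgrad (x : Ed d) : ‖gradient v x - gradient (truncFun η v a) x‖ = ‖fderiv ℝ w x‖ :=
    norm_gradient_sub_gradient_eq_norm_fderiv_sub_const
      (hv.differentiable one_ne_zero x) (hvR.differentiable one_ne_zero x) a
  refine l2On_le_mul_l2On (by positivity) ?_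
  simp only [Real.norm_eq_abs, sq_abs, hgrad]
  simpa [finrank_euclideanSpace_fin] using
    hstar.setIntegral_sq_le_of_eqOn_zero_closedBall volume hΩo.measurableSet hR hΩB hw hw0

/-- Truncation-operator estimate (3.14) of the paper (a scaled Poincaré-type
inequality): for convex open `Ω` with `B_R ⊆ Ω ⊆ B_{2R}`,
`‖v − v_R − a‖_{L²(Ω)} ≤ C R ‖∇v − ∇v_R‖_{L²(Ω ∖ B_{R/2})}`, with `C`
depending only on the dimension `d` and on `c₀`. -/
theorem trunc_poincare_estimate (d : ℕ) (hd : 1 ≤ d) (c₀ : ℝ) (hc₀ : 0 < c₀) :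
    ∃ C : ℝ, 0 < C ∧
      ∀ (R : ℝ), 0 < R →
      ∀ (η : Ed d → ℝ), IsCutoff d c₀ R η →
      ∀ (Ω : Set (Ed d)), Convex ℝ Ω → IsOpen Ω →
        closedBall (0 : Ed d) R ⊆ Ω → Ω ⊆ closedBall (0 : Ed d) (2 * R) →
      ∀ (v : Ed d → ℝ), ContDiff ℝ 1 v →
        Integrable (fun x => ‖gradient v x‖ ^ 2) →
        l2On Ω
            (fun x => v x - truncFun η v (truncAvg d R v) x - truncAvg d R v)
          ≤ C * R * l2On (Ω \ closedBall (0 : Ed d) (R / 2))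
              (fun x => gradient v x - gradient (truncFun η v (truncAvg d R v)) x) :=
  trunc_poincare_estimate_general d c₀
end
end
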